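/- arXiv:2412.11013 — 2 statements merged into one kernel-verified Lean document; each statement's English description precedes it below -/
import Mathlib

section
/- In the Hopf algebra PSym_A, the antipode satisfies S(h_P) = Σ_{J ⪯ P} (-1)^{ℓ(J)} h_{sort(J)}, where the sum runs over all sentences J refining the p-sentence P. -/
open scoped TensorProduct

attribute [local instance] Classical.propDecidable

/-- Graded lexicographic order on words. -/
def gle {A : Type*} [LinearOrder A] (v w : List A) : Prop :=
  v.length < w.length ∨ (v.length = w.length ∧ (v = w ∨ List.Lex (· < ·) v w))

/-- Sort the words of a sentence into weakly decreasing graded lexicographic order. -/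
noncomputable def sortSent {A : Type*} [LinearOrder A] (I : List (List A)) :
    List (List A) :=
  I.mergeSort fun v w => decide (gle w v)

/-- `PSym_A`: the commutative polynomial algebra over ℚ on generators `h_w` indexed
by nonempty words `w` over `A`. -/
abbrev PSymA (A : Type*) := MvPolynomial {w : List A // w ≠ []} ℚ

/-- The generator `h_w` (with `h_∅ = 1`). -/
noncomputable def hgen {A : Type*} (w : List A) : PSymA A :=
  if h : w = [] then 1 else MvPolynomial.X ⟨w, h⟩

/-- The basis element `h_P = h_{w_1} ⋯ h_{w_k}` for a (p-)sentence `P`. -/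
noncomputable def hsent {A : Type*} (P : List (List A)) : PSymA A :=
  (P.map hgen).prod

/-- All refinements of a single word (as sentences with that maximal word). -/
def wordSplits {A : Type*} : List A → List (List (List A))
  | [] => [[]]
  | a :: l =>
      (wordSplits l).flatMap fun s =>
        [[a] :: s] ++
          (match s with
            | [] => []
            | w :: rest => [(a :: w) :: rest])

/-- All refinements of a sentence (refine each word and concatenate). -/
def refinements {A : Type*} (I : List (List A)) : List (List (List A)) :=
  I.foldr (fun w acc => (wordSplits w).flatMap fun s => acc.map (s ++ ·)) [[]]

/-- The comultiplication of `PSym_A`, as an algebra map determined on generators: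
`Δ(h_w) = Σ_{u·v = w} h_u ⊗ h_v` (deconcatenation, from right-containment). -/
noncomputable def Δh {A : Type*} : PSymA A →ₐ[ℚ] PSymA A ⊗[ℚ] PSymA A :=
  MvPolynomial.aeval fun w : {w : List A // w ≠ []} =>
    ∑ j ∈ Finset.range (w.1.length + 1), hgen (w.1.take j) ⊗ₜ[ℚ] hgen (w.1.drop j)

/-- The counit of `PSym_A`: `ε(h_P) = 1` if `P = ∅` and `0` otherwise. -/
noncomputable def εh {A : Type*} : PSymA A →ₐ[ℚ] ℚ :=
  MvPolynomial.aeval fun _ : {w : List A // w ≠ []} => (0 : ℚ)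

/-- The candidate antipode, determined on generators by
`S(h_w) = Σ_{J ⪯ (w)} (-1)^{ℓ(J)} h_{sort(J)}`. -/
noncomputable def Sh {A : Type*} [LinearOrder A] : PSymA A →ₐ[ℚ] PSymA A :=
  MvPolynomial.aeval fun w : {w : List A // w ≠ []} =>
    ((wordSplits w.1).map fun J => (-1 : PSymA A) ^ J.length * hsent (sortSent J)).sum

/-! On a generator, `Sh (h_w)` is a signed sum over the splittings of `w`. Grouping the
splittings by their first word gives `Σ_{uv = w} h_u · Sh (h_v) = δ_{w,∅}`: as functions on
words, `w ↦ Sh (h_w)` is a right inverse of `w ↦ h_w` for the deconcatenation convolution.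
Since this convolution is associative and a function taking the value `1` on the empty word
is right-cancellable, it is also a left inverse, which is the antipode identity on
generators; both sides of that identity are algebra maps, so it holds everywhere. The formula
for `Sh (h_P)` is multiplicativity of `Sh`, since the refinements of a sentence are the
concatenations of splittings of its words. -/

section Deconcatenation

variable {A R : Type*}

def deconcatConv [Semiring R] (f g : List A → R) (w : List A) : R :=
  ∑ j ∈ Finset.range (w.length + 1), f (w.take j) * g (w.drop j)

def nilIndicator [Zero R] [One R] (w : List A) : R :=
  if w = [] then 1 else 0

section Semiring

variable [Semiring R]

lemma deconcatConv_nilIndicator (f : List A → R) : deconcatConv f nilIndicator = f := by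
  funext w
  rw [deconcatConv, Finset.sum_eq_single w.length]
  · simp [nilIndicator]
  · intro j hj hne
    have : w.drop j ≠ [] := by
      simp only [ne_eq, List.drop_eq_nil_iff, not_le]
      rw [Finset.mem_range] at hj
      omega
    simp [nilIndicator, this]
  · simp

lemma nilIndicator_deconcatConv (f : List A → R) : deconcatConv nilIndicator f = f := by
  funext w
  rw [deconcatConv, Finset.sum_eq_single 0]
  · simp [nilIndicator]
  · intro j hj hj0
    have : w.take j ≠ [] := by
      rw [Finset.mem_range] at hj
      apply List.ne_nil_of_length_pos
      rw [List.length_take]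
      omega
    simp [nilIndicator, this]
  · simp

lemma deconcatConv_assoc (f g k : List A → R) :
    deconcatConv (deconcatConv f g) k = deconcatConv f (deconcatConv g k) := by
  funext w
  set n := w.length
  have lhs : deconcatConv (deconcatConv f g) k w = ∑ j ∈ Finset.Ico 0 (n + 1),
      ∑ i ∈ Finset.Ico 0 (j + 1),
        f (w.take i) * g ((w.drop i).take (j - i)) * k (w.drop j) := by
    simp only [deconcatConv, ← Finset.range_eq_Ico, Finset.sum_mul]
    refine Finset.sum_congr rfl fun j hj => ?_
    rw [Finset.mem_range] at hj
    rw [List.length_take, min_eq_left (by omega)]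
    refine Finset.sum_congr rfl fun i hi => ?_
    rw [Finset.mem_range] at hi
    rw [List.take_take, min_eq_left (by omega), List.drop_take]
  have rhs : deconcatConv f (deconcatConv g k) w = ∑ i ∈ Finset.Ico 0 (n + 1),
      ∑ j ∈ Finset.Ico i (n + 1),
        f (w.take i) * g ((w.drop i).take (j - i)) * k (w.drop j) := by
    simp only [deconcatConv, ← Finset.range_eq_Ico, Finset.mul_sum]
    refine Finset.sum_congr rfl fun i hi => ?_
    rw [Finset.mem_range] at hi
    rw [Finset.sum_Ico_eq_sum_range, List.length_drop]
    refine Finset.sum_congr (by congr 1; omega) fun m _ => ?_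
    rw [List.drop_drop, Nat.add_sub_cancel_left, mul_assoc]
  rw [lhs, rhs, Finset.sum_Ico_Ico_comm]

end Semiring

variable [Ring R]

lemma eq_of_deconcatConv_eq {a b g : List A → R} (hg : g [] = 1)
    (h : deconcatConv a g = deconcatConv b g) : a = b := by
  suffices ∀ n, ∀ w : List A, w.length = n → a w = b w from funext fun w => this _ w rfl
  intro n
  induction n using Nat.strong_induction_on with
  | _ n ih =>
    intro w hw
    have split (c : List A → R) : deconcatConv c g w =
        ∑ j ∈ Finset.range n, c (w.take j) * g (w.drop j) + c w := by
      rw [deconcatConv, hw, Finset.sum_range_succ, ← hw, List.take_length, List.drop_length,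
        hg, mul_one]
    have prefixes : ∑ j ∈ Finset.range n, a (w.take j) * g (w.drop j) =
        ∑ j ∈ Finset.range n, b (w.take j) * g (w.drop j) := by
      refine Finset.sum_congr rfl fun j hj => ?_
      rw [Finset.mem_range] at hj
      rw [ih j hj _ (by rw [List.length_take]; omega)]
    have hw_conv := congrFun h w
    rwa [split, split, prefixes, add_right_inj] at hw_conv

lemma deconcatConv_comm_of_eq_nilIndicator {f g : List A → R} (hg : g [] = 1)
    (h : deconcatConv f g = nilIndicator) : deconcatConv g f = nilIndicator := by
  refine eq_of_deconcatConv_eq hg ?_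
  rw [deconcatConv_assoc, h, deconcatConv_nilIndicator, nilIndicator_deconcatConv]

end Deconcatenation

section Splits

variable {A : Type*}

lemma ne_nil_of_mem_wordSplits {w : List A} (hw : w ≠ []) {s : List (List A)}
    (hs : s ∈ wordSplits w) : s ≠ [] := by
  obtain ⟨a, l, rfl⟩ := List.exists_cons_of_ne_nil hw
  simp only [wordSplits, List.mem_flatMap] at hs
  obtain ⟨t, -, ht⟩ := hs
  cases t <;>
    simp only [List.cons_append, List.nil_append, List.append_nil, List.mem_cons,
      List.not_mem_nil, or_false] at ht <;>
    rcases ht with rfl | rfl <;> simp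

lemma sum_map_wordSplits {M : Type*} [AddCommMonoid M] (w : List A) (hw : w ≠ [])
    (F : List (List A) → M) :
    ((wordSplits w).map F).sum = ∑ k ∈ Finset.range w.length,
      ((wordSplits (w.drop (k + 1))).map fun s => F (w.take (k + 1) :: s)).sum := by
  induction w generalizing F with
  | nil => exact absurd rfl hw
  | cons a l ih =>
    rcases eq_or_ne l [] with rfl | hl
    · simp [wordSplits]
    have splits_cons : ((wordSplits (a :: l)).map F).sum =
        ((wordSplits l).map fun s => F ([a] :: s)).sum +
          ((wordSplits l).map fun s => F (s.modifyHead (a :: ·))).sum := by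
      rw [← List.sum_map_add]
      simp only [wordSplits, List.flatMap_def, List.map_flatten, List.sum_flatten, List.map_map]
      refine congrArg List.sum (List.map_congr_left fun s hs => ?_)
      obtain ⟨u, rest, rfl⟩ := List.exists_cons_of_ne_nil (ne_nil_of_mem_wordSplits hl hs)
      simp
    rw [splits_cons, ih hl fun s => F (s.modifyHead (a :: ·)), List.length_cons,
      Finset.sum_range_succ', add_comm]
    simp

end Splits

section PSym

variable {A : Type*}

lemma hgen_nil : hgen ([] : List A) = 1 := dif_pos rfl

lemma hsent_cons (w : List A) (P : List (List A)) : hsent (w :: P) = hgen w * hsent P :=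
  List.prod_cons

lemma hsent_append (P Q : List (List A)) : hsent (P ++ Q) = hsent P * hsent Q := by
  simp [hsent]

lemma hsent_sortSent [LinearOrder A] (J : List (List A)) : hsent (sortSent J) = hsent J :=
  ((List.mergeSort_perm J _).map hgen).prod_eq

noncomputable def signedSplitSum (w : List A) : PSymA A :=
  ((wordSplits w).map fun J => (-1 : PSymA A) ^ J.length * hsent J).sum

lemma signedSplitSum_nil : signedSplitSum ([] : List A) = 1 := by
  simp [signedSplitSum, wordSplits, hsent]

lemma signedSplitSum_eq_neg_sum {w : List A} (hw : w ≠ []) :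
    signedSplitSum w = -∑ k ∈ Finset.range w.length,
      hgen (w.take (k + 1)) * signedSplitSum (w.drop (k + 1)) := by
  rw [signedSplitSum, sum_map_wordSplits w hw, ← Finset.sum_neg_distrib]
  refine Finset.sum_congr rfl fun k _ => ?_
  rw [signedSplitSum, ← neg_mul, ← List.sum_map_mul_left]
  refine congrArg List.sum (List.map_congr_left fun s _ => ?_)
  rw [List.length_cons, pow_succ, hsent_cons]
  ring

lemma deconcatConv_hgen_signedSplitSum :
    deconcatConv hgen signedSplitSum = (nilIndicator : List A → PSymA A) := by
  funext w
  rcases eq_or_ne w [] with rfl | hw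
  · simp [deconcatConv, nilIndicator, hgen_nil, signedSplitSum_nil]
  · rw [deconcatConv, Finset.sum_range_succ', signedSplitSum_eq_neg_sum (w.drop_zero ▸ hw)]
    simp [nilIndicator, hw, hgen_nil]

lemma Sh_hgen [LinearOrder A] (w : List A) : Sh (hgen w) = signedSplitSum w := by
  rcases eq_or_ne w [] with rfl | hw
  · rw [hgen_nil, map_one, signedSplitSum_nil]
  · simp only [hgen, dif_neg hw, Sh, MvPolynomial.aeval_X, hsent_sortSent, signedSplitSum]

lemma sum_map_refinements (P : List (List A)) :
    ((refinements P).map fun J => (-1 : PSymA A) ^ J.length * hsent J).sum =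
      (P.map signedSplitSum).prod := by
  induction P with
  | nil => simp [refinements, hsent]
  | cons w P ih =>
    have refinements_cons : refinements (w :: P) =
        (wordSplits w).flatMap fun s => (refinements P).map (s ++ ·) := rfl
    rw [refinements_cons, List.flatMap_def, List.map_flatten, List.sum_flatten, List.map_map,
      List.map_map, List.map_cons, List.prod_cons, ← ih, signedSplitSum,
      ← List.sum_map_mul_right]
    refine congrArg List.sum (List.map_congr_left fun s _ => ?_)
    simp only [Function.comp_apply, List.map_map]
    rw [← List.sum_map_mul_left]
    refine congrArg List.sum (List.map_congr_left fun J _ => ?_)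
    rw [Function.comp_apply, List.length_append, pow_add, hsent_append]
    ring

end PSym

lemma mul'_map_Sh_Δh_eq_εh {A : Type*} [LinearOrder A] (x : PSymA A) :
    (LinearMap.mul' ℚ (PSymA A))
        ((TensorProduct.map (Sh (A := A)).toLinearMap LinearMap.id) (Δh x)) =
      algebraMap ℚ (PSymA A) (εh x) := by
  -- Commutativity makes the convolution `Sh ⋆ id` an algebra map, so generators suffice.
  let conv : PSymA A →ₐ[ℚ] PSymA A :=
    (Algebra.TensorProduct.lmul' ℚ).comp
      ((Algebra.TensorProduct.map Sh (AlgHom.id ℚ _)).comp Δh)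
  have conv_eq : conv = (Algebra.ofId ℚ (PSymA A)).comp εh := by
    refine MvPolynomial.algHom_ext fun w => ?_
    have antipode_gen := congrFun (deconcatConv_comm_of_eq_nilIndicator signedSplitSum_nil
      deconcatConv_hgen_signedSplitSum) w.1
    rw [deconcatConv, nilIndicator, if_neg w.2] at antipode_gen
    simpa only [conv, AlgHom.comp_apply, Δh, εh, MvPolynomial.aeval_X, map_sum, map_zero,
      Algebra.TensorProduct.map_tmul, Algebra.TensorProduct.lmul'_apply_tmul, AlgHom.coe_id,
      id_eq, Sh_hgen] using antipode_gen
  exact DFunLike.congr_fun conv_eq x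

theorem stmt10_general {A : Type*} [LinearOrder A] (P : List (List A)) :
    Sh (hsent P) =
      ((refinements P).map fun J => (-1 : PSymA A) ^ J.length * hsent (sortSent J)).sum ∧
    (LinearMap.mul' ℚ (PSymA A))
        ((TensorProduct.map (Sh (A := A)).toLinearMap LinearMap.id) (Δh (hsent P))) =
      algebraMap ℚ (PSymA A) (εh (hsent P)) := by
  refine ⟨?_, mul'_map_Sh_Δh_eq_εh (hsent P)⟩
  simp only [hsent_sortSent]
  rw [sum_map_refinements, hsent, map_list_prod, List.map_map]
  exact congrArg List.prod (List.map_congr_left fun w _ => Sh_hgen w)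

/-- In the Hopf algebra `PSym_A`, the antipode satisfies
`S(h_P) = Σ_{J ⪯ P} (-1)^{ℓ(J)} h_{sort(J)}`, the sum running over all sentences `J`
refining the p-sentence `P`: the map `Sh` given by this formula satisfies the antipode
(convolution inverse) property with respect to `Δ` and `ε` on each basis element `h_P`,
and on `h_P` it is given by exactly this sum over refinements. -/
theorem stmt10 {A : Type*} [LinearOrder A] (P : List (List A))
    (hw : ∀ w ∈ P, w ≠ []) (hsorted : P.Pairwise fun v w => gle w v) :
    Sh (hsent P) =
      ((refinements P).map fun J => (-1 : PSymA A) ^ J.length * hsent (sortSent J)).sum ∧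
    (LinearMap.mul' ℚ (PSymA A))
        ((TensorProduct.map (Sh (A := A)).toLinearMap LinearMap.id) (Δh (hsent P))) =
      algebraMap ℚ (PSymA A) (εh (hsent P)) :=
  stmt10_general P
end

section
/- For any p-sentence P, the colored monomial symmetric functions satisfy: the comultiplication inherited from QSym_A restricts, giving Δ(m_P) = Σ_{Q ⊑ P} m_Q ⊗ m_{P ⧵⧵ Q}, where the sum runs over submultisets Q of the multiset of words of P, and P ⧵⧵ Q is the p-sentence on the complementary multiset. -/
open scoped TensorProduct

attribute [local instance] Classical.propDecidable

/-- `QSym_A` modeled as the free ℚ-module with basis `M_I` indexed by sentences. -/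
abbrev QSymA (A : Type*) := (List (List A)) →₀ ℚ

/-- The comultiplication of `QSym_A` on the monomial basis:
`Δ(M_I) = Σ_{J·K = I} M_J ⊗ M_K`. -/
noncomputable def Δm (A : Type*) : QSymA A →ₗ[ℚ] QSymA A ⊗[ℚ] QSymA A :=
  Finsupp.lift (QSymA A ⊗[ℚ] QSymA A) ℚ (List (List A)) fun I =>
    ∑ j ∈ Finset.range (I.length + 1),
      Finsupp.single (I.take j) (1 : ℚ) ⊗ₜ[ℚ] Finsupp.single (I.drop j) (1 : ℚ)

/-- The colored monomial symmetric function `m_P = Σ_{sort(I) = P} M_I`, the sum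
over the distinct rearrangements `I` of the words of `P`. -/
noncomputable def mcol {A : Type*} (P : List (List A)) : QSymA A :=
  ∑ I ∈ P.permutations.toFinset, Finsupp.single I (1 : ℚ)

/-! Cutting a rearrangement `I` of `P` as `J · K` amounts to choosing a sub-multiset `Q` of the
words of `P` together with a rearrangement `J` of `Q` and a rearrangement `K` of `P ⧵⧵ Q`;
`Q` is recovered from `J` by sorting, which is why `P` is taken sorted for a total order on words
(here `gle`, the length-then-lexicographic order). -/

theorem gle_iff_toLex_le {A : Type*} [LinearOrder A] {v w : List A} :
    gle v w ↔ toLex (v.length, v) ≤ toLex (w.length, w) := by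
  rw [Prod.Lex.toLex_le_toLex, le_iff_eq_or_lt]
  rfl

instance {A : Type*} [LinearOrder A] : Std.Total (fun v w : List A => gle w v) :=
  ⟨fun v w => by simpa only [gle_iff_toLex_le] using le_total _ _⟩

instance {A : Type*} [LinearOrder A] : IsTrans (List A) (fun v w => gle w v) :=
  ⟨fun _ _ _ h₁ h₂ =>
    gle_iff_toLex_le.2 <| (gle_iff_toLex_le.1 h₂).trans (gle_iff_toLex_le.1 h₁)⟩

instance {A : Type*} [LinearOrder A] : Std.Antisymm (fun v w : List A => gle w v) :=
  ⟨fun _ _ h₁ h₂ => congrArg (fun x => (ofLex x).2)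
    (le_antisymm (gle_iff_toLex_le.1 h₂) (gle_iff_toLex_le.1 h₁))⟩

namespace List

variable {β : Type*} {r : β → β → Prop} [Std.Total r] [IsTrans β r] [Std.Antisymm r]
  {P : List β}

theorem insertionSort_sublist_of_subperm [DecidableRel r] (hP : P.Pairwise r) {J : List β}
    (hJ : J <+~ P) : J.insertionSort r <+ P :=
  sublist_of_subperm_of_pairwise ((perm_insertionSort r J).subperm.trans hJ)
    (pairwise_insertionSort r J) hP

theorem perm_and_perm_diff_iff [BEq β] [LawfulBEq β] [DecidableRel r] (hP : P.Pairwise r)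
    {s J K : List β} (hs : s <+ P) :
    J ~ s ∧ K ~ P.diff s ↔ J ++ K ~ P ∧ J.insertionSort r = s := by
  have hsP : s ++ P.diff s ~ P :=
    subperm_append_diff_self_of_count_le (subperm_ext_iff.1 hs.subperm)
  have hsort (hJ : J ~ s) : J.insertionSort r = s :=
    ((perm_insertionSort r J).trans hJ).eq_of_pairwise' (pairwise_insertionSort r J) (hP.sublist hs)
  refine ⟨fun ⟨hJ, hK⟩ => ⟨(hJ.append hK).trans hsP, hsort hJ⟩, fun ⟨hJK, hJ⟩ => ?_⟩
  have hJs : J ~ s := hJ ▸ (perm_insertionSort r J).symm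
  refine ⟨hJs, (perm_append_left_iff s).1 ?_⟩
  exact ((hJs.symm.append_right K).trans hJK).trans hsP.symm

theorem sum_take_drop_permutations_eq_sum_sublists [DecidableEq β] [BEq β] [LawfulBEq β]
    {M : Type*} [AddCommMonoid M] (hP : P.Pairwise r) (f : List β → List β → M) :
    ∑ I ∈ P.permutations.toFinset,
        ∑ j ∈ Finset.range (I.length + 1), f (I.take j) (I.drop j) =
      ∑ s ∈ P.sublists.toFinset,
        ∑ JK ∈ s.permutations.toFinset ×ˢ (P.diff s).permutations.toFinset, f JK.1 JK.2 := by
  classical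
  rw [Finset.sum_sigma', Finset.sum_sigma']
  refine Finset.sum_bij'
    (fun a _ => ⟨(a.1.take a.2).insertionSort r, (a.1.take a.2, a.1.drop a.2)⟩)
    (fun b _ => ⟨b.2.1 ++ b.2.2, b.2.1.length⟩) ?_ ?_ ?_ ?_ (fun _ _ => rfl)
  · rintro ⟨I, j⟩ ha
    simp only [Finset.mem_sigma, mem_toFinset, mem_permutations, Finset.mem_range,
      mem_sublists, Finset.mem_product] at ha ⊢
    have hs := insertionSort_sublist_of_subperm hP ((take_sublist j I).subperm.trans ha.1.subperm)
    exact ⟨hs, (perm_and_perm_diff_iff hP hs).2 ⟨(take_append_drop j I).symm ▸ ha.1, rfl⟩⟩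
  · rintro ⟨s, J, K⟩ hb
    simp only [Finset.mem_sigma, mem_toFinset, mem_permutations, Finset.mem_range,
      mem_sublists, Finset.mem_product] at hb ⊢
    exact ⟨((perm_and_perm_diff_iff hP hb.1).1 hb.2).1, by simp⟩
  · rintro ⟨I, j⟩ ha
    simp only [Finset.mem_sigma, Finset.mem_range] at ha
    simp [Nat.min_eq_left (Nat.le_of_lt_succ ha.2)]
  · rintro ⟨s, J, K⟩ hb
    simp only [Finset.mem_sigma, mem_toFinset, mem_permutations, mem_sublists,
      Finset.mem_product] at hb
    simp [((perm_and_perm_diff_iff hP hb.1).1 hb.2).2]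

end List

theorem Δm_single {A : Type*} (I : List (List A)) :
    Δm A (Finsupp.single I 1) = ∑ j ∈ Finset.range (I.length + 1),
      Finsupp.single (I.take j) (1 : ℚ) ⊗ₜ[ℚ] Finsupp.single (I.drop j) (1 : ℚ) := by
  rw [Δm, Finsupp.lift_apply, Finsupp.sum_single_index] <;> simp

theorem mcol_tmul_mcol {A : Type*} (s t : List (List A)) :
    mcol s ⊗ₜ[ℚ] mcol t = ∑ JK ∈ s.permutations.toFinset ×ˢ t.permutations.toFinset,
      Finsupp.single JK.1 (1 : ℚ) ⊗ₜ[ℚ] Finsupp.single JK.2 (1 : ℚ) := by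
  rw [mcol, mcol, Finset.sum_product, TensorProduct.sum_tmul]
  simp only [TensorProduct.tmul_sum]

-- A sub-multiset `Q ⊑ P` is a distinct sublist `s` of the sorted list `P`, and `P ⧵⧵ Q` is `P.diff s`.
theorem stmt15_general {A : Type*} [LinearOrder A] (P : List (List A))
    (hsorted : P.Pairwise fun v w => gle w v) :
    Δm A (mcol P) = ∑ s ∈ P.sublists.toFinset, mcol s ⊗ₜ[ℚ] mcol (P.diff s) := by
  simp only [mcol_tmul_mcol]
  rw [mcol, map_sum]
  simp only [Δm_single]
  exact List.sum_take_drop_permutations_eq_sum_sublists hsorted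
    fun J K => Finsupp.single J (1 : ℚ) ⊗ₜ[ℚ] Finsupp.single K (1 : ℚ)

/-- `Δ(m_P) = Σ_{Q ⊑ P} m_Q ⊗ m_{P ⧵⧵ Q}`, the sum over distinct submultisets `Q` of
the multiset of words of `P` (realized as the distinct sublists of the sorted list `P`,
with `P.diff s` the complementary multiset). -/
theorem stmt15 {A : Type*} [LinearOrder A] (P : List (List A))
    (hw : ∀ w ∈ P, w ≠ []) (hsorted : P.Pairwise fun v w => gle w v) :
    Δm A (mcol P) = ∑ s ∈ P.sublists.toFinset, mcol s ⊗ₜ[ℚ] mcol (P.diff s) :=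
  stmt15_general P hsorted
end
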